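/- arXiv:math/0205035 — 4 statements merged into one kernel-verified Lean document; each statement's English description precedes it below -/
import Mathlib

section
/- Let k be a field of characteristic zero, let a, b, a', b' be units of k⟦t⟧ and let n, m, n', m' be natural numbers with min(3n, 2m) < 12 and min(3n', 2m') < 12. If some change of Weierstrass variables C = (u, r, s, t) over k((t)) transforms the Weierstrass curve y² = x³ + a tⁿ x + b tᵐ into y² = x³ + a' t^{n'} x + b' t^{m'}, then the t-adic valuation of u is 0, and n = n' and m = m'. (Minimal Weierstrass equations have well-defined exponents.) -/
/-- The Laurent series `t`, i.e. the image of the power series variable in `k((t))`. -/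
noncomputable def tL (k : Type*) [Field k] : LaurentSeries k :=
  ((PowerSeries.X : PowerSeries k) : LaurentSeries k)


lemma order_coe_unit {k : Type*} [Field k] (a : (PowerSeries k)ˣ) :
    ((a : PowerSeries k) : LaurentSeries k).order = 0 := by
  have hc : (PowerSeries.constantCoeff (R := k)) (a : PowerSeries k) ≠ 0 := by
    have := (PowerSeries.isUnit_iff_constantCoeff).mp a.isUnit
    exact this.ne_zero
  have h0 : ((a : PowerSeries k) : LaurentSeries k).coeff (0 : ℤ) ≠ 0 := by
    rw [PowerSeries.coeff_coe]
    simpa using hc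
  have hne : ((a : PowerSeries k) : LaurentSeries k) ≠ 0 := by
    intro h; rw [h] at h0; simp at h0
  refine le_antisymm (HahnSeries.order_le_of_coeff_ne_zero h0) ?_
  by_contra hlt
  push_neg at hlt
  have := mt HahnSeries.coeff_order_eq_zero.mp hne
  rw [PowerSeries.coeff_coe, if_pos hlt] at this
  exact this rfl

lemma order_tL {k : Type*} [Field k] : (tL k).order = 1 := by
  rw [tL, PowerSeries.coe_X]
  exact HahnSeries.order_single one_ne_zero

lemma tL_ne_zero {k : Type*} [Field k] : tL k ≠ 0 := by
  intro h
  have := order_tL (k := k)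
  rw [h] at this
  simp [HahnSeries.order_zero] at this

lemma coe_unit_ne_zero {k : Type*} [Field k] (a : (PowerSeries k)ˣ) :
    ((a : PowerSeries k) : LaurentSeries k) ≠ 0 := by
  have := HahnSeries.ofPowerSeries_injective (Γ := ℤ) (R := k)
  intro h
  have : (a : PowerSeries k) = 0 := by
    apply HahnSeries.ofPowerSeries_injective (Γ := ℤ)
    simpa using h
  exact a.ne_zero this

lemma order_A {k : Type*} [Field k] (a : (PowerSeries k)ˣ) (n : ℕ) :
    (((a : PowerSeries k) : LaurentSeries k) * tL k ^ n).order = n := by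
  rw [HahnSeries.order_mul (coe_unit_ne_zero a) (pow_ne_zero _ tL_ne_zero),
    order_coe_unit, HahnSeries.order_pow, order_tL]
  simp

/-- Minimal Weierstrass equations have well-defined exponents: if `a, b, a', b'` are units of
`k⟦t⟧`, `min (3n, 2m) < 12`, `min (3n', 2m') < 12`, and some change of Weierstrass variables
`C = (u, r, s, t)` over `k((t))` transforms `y² = x³ + a tⁿ x + b tᵐ` into
`y² = x³ + a' t^{n'} x + b' t^{m'}`, then the `t`-adic valuation of `u` is `0`, `n = n'`
and `m = m'`. -/
theorem stmt_3 (k : Type*) [Field k] [CharZero k] (a b a' b' : (PowerSeries k)ˣ)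
    (n m n' m' : ℕ)
    (hmin : min (3 * n) (2 * m) < 12) (hmin' : min (3 * n') (2 * m') < 12)
    (C : WeierstrassCurve.VariableChange (LaurentSeries k))
    (h : C • (WeierstrassCurve.mk 0 0 0
        (((a : PowerSeries k) : LaurentSeries k) * tL k ^ n)
        (((b : PowerSeries k) : LaurentSeries k) * tL k ^ m)) =
      WeierstrassCurve.mk 0 0 0
        (((a' : PowerSeries k) : LaurentSeries k) * tL k ^ n')
        (((b' : PowerSeries k) : LaurentSeries k) * tL k ^ m')) :
    (C.u : LaurentSeries k).order = 0 ∧ n = n' ∧ m = m' := by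
  haveI : CharZero (LaurentSeries k) :=
    charZero_of_injective_algebraMap (algebraMap k (LaurentSeries k)).injective
  set K := LaurentSeries k
  set u : K := (C.u : K) with hu
  have hu0 : u ≠ 0 := C.u.ne_zero
  have hinv : ((C.u⁻¹ : Kˣ) : K) = u⁻¹ := by
    rw [hu, ← Units.val_inv_eq_inv_val]
  have h1 := congrArg WeierstrassCurve.a₁ h
  have h2 := congrArg WeierstrassCurve.a₂ h
  have h3 := congrArg WeierstrassCurve.a₃ h
  have h4 := congrArg WeierstrassCurve.a₄ h
  have h6 := congrArg WeierstrassCurve.a₆ h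
  simp only [WeierstrassCurve.variableChange_a₁, WeierstrassCurve.variableChange_a₂,
    WeierstrassCurve.variableChange_a₃, WeierstrassCurve.variableChange_a₄,
    WeierstrassCurve.variableChange_a₆, hinv] at h1 h2 h3 h4 h6
  -- s = 0
  have hs : C.s = 0 := by
    rcases mul_eq_zero.mp h1 with h1 | h1
    · exact absurd h1 (inv_ne_zero hu0)
    · have h2s : (2 : K) * C.s = 0 := by linear_combination h1
      rcases mul_eq_zero.mp h2s with h' | h'
      · exact absurd h' two_ne_zero
      · exact h'
  have hr : C.r = 0 := by
    rw [hs] at h2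
    rcases mul_eq_zero.mp h2 with h2 | h2
    · exact absurd h2 (pow_ne_zero _ (inv_ne_zero hu0))
    · have h3r : (3 : K) * C.r = 0 := by linear_combination h2
      rcases mul_eq_zero.mp h3r with h' | h'
      · exact absurd h' three_ne_zero
      · exact h'
  have ht : C.t = 0 := by
    rcases mul_eq_zero.mp h3 with h3 | h3
    · exact absurd h3 (pow_ne_zero _ (inv_ne_zero hu0))
    · have h2t : (2 : K) * C.t = 0 := by linear_combination h3
      rcases mul_eq_zero.mp h2t with h' | h'
      · exact absurd h' two_ne_zero
      · exact h'
  simp only [hs, hr, ht] at h4 h6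
  have h4' : u⁻¹ ^ 4 * (((a : PowerSeries k) : K) * tL k ^ n) =
      ((a' : PowerSeries k) : K) * tL k ^ n' := by
    rw [← h4]; ring
  have h6' : u⁻¹ ^ 6 * (((b : PowerSeries k) : K) * tL k ^ m) =
      ((b' : PowerSeries k) : K) * tL k ^ m' := by
    rw [← h6]; ring
  set v : ℤ := u.order with hv
  have hordinv : (u⁻¹).order = -v := by
    have : (u * u⁻¹).order = 0 := by
      rw [mul_inv_cancel₀ hu0, HahnSeries.order_one]
    rw [HahnSeries.order_mul hu0 (inv_ne_zero hu0)] at this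
    omega
  have hAne : ((a : PowerSeries k) : K) * tL k ^ n ≠ 0 :=
    mul_ne_zero (coe_unit_ne_zero a) (pow_ne_zero _ tL_ne_zero)
  have hBne : ((b : PowerSeries k) : K) * tL k ^ m ≠ 0 :=
    mul_ne_zero (coe_unit_ne_zero b) (pow_ne_zero _ tL_ne_zero)
  have e1 : -(4 * v) + (n : ℤ) = (n' : ℤ) := by
    have := congrArg HahnSeries.order h4'
    rw [HahnSeries.order_mul (pow_ne_zero _ (inv_ne_zero hu0)) hAne,
      HahnSeries.order_pow, hordinv, order_A, order_A] at this
    rw [nsmul_eq_mul] at this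
    push_cast at this ⊢
    omega
  have e2 : -(6 * v) + (m : ℤ) = (m' : ℤ) := by
    have := congrArg HahnSeries.order h6'
    rw [HahnSeries.order_mul (pow_ne_zero _ (inv_ne_zero hu0)) hBne,
      HahnSeries.order_pow, hordinv, order_A, order_A] at this
    rw [nsmul_eq_mul] at this
    push_cast at this ⊢
    omega
  refine ⟨?_, ?_, ?_⟩ <;> omega
end

section
/- Let n ≥ 1 be an integer and set e₁ = (1,0,0), u = (1,1,0), w = (0,1,n), e₃ = (0,0,1) in ℝ³. Then cone{e₁, u, e₃} ∪ cone{u, w, e₃} = cone{e₁, u, w, e₃} = cone{e₁, w, e₃} ∪ cone{e₁, u, w}. -/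
/-- The cone (set of nonnegative real linear combinations) generated by a set of vectors. -/
def cone (S : Set (Fin 3 → ℝ)) : Set (Fin 3 → ℝ) :=
  {x | ∃ (r : ℕ) (c : Fin r → ℝ) (v : Fin r → (Fin 3 → ℝ)),
    (∀ i, 0 ≤ c i) ∧ (∀ i, v i ∈ S) ∧ x = ∑ i, c i • v i}

lemma cone_mono {S T : Set (Fin 3 → ℝ)} (h : S ⊆ T) : cone S ⊆ cone T := by
  rintro x ⟨r, c, v, hc, hv, rfl⟩
  exact ⟨r, c, v, hc, fun i => h (hv i), rfl⟩

lemma cone_subset {S : Set (Fin 3 → ℝ)} {T : Set (Fin 3 → ℝ)}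
    (h0 : (0 : Fin 3 → ℝ) ∈ T)
    (hsmul : ∀ v ∈ S, ∀ c : ℝ, 0 ≤ c → c • v ∈ T)
    (hadd : ∀ x ∈ T, ∀ y ∈ T, x + y ∈ T) : cone S ⊆ T := by
  rintro x ⟨r, c, v, hc, hv, rfl⟩
  exact Finset.sum_induction (fun i => c i • v i) (· ∈ T)
    (fun a b ha hb => hadd a ha b hb) h0 (fun i _ => hsmul (v i) (hv i) (c i) (hc i))

lemma mem_cone3 {S : Set (Fin 3 → ℝ)} {v1 v2 v3 : Fin 3 → ℝ}
    (h1 : v1 ∈ S) (h2 : v2 ∈ S) (h3 : v3 ∈ S) {a b c : ℝ}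
    (ha : 0 ≤ a) (hb : 0 ≤ b) (hc : 0 ≤ c) :
    a • v1 + b • v2 + c • v3 ∈ cone S := by
  refine ⟨3, ![a, b, c], ![v1, v2, v3], ?_, ?_, ?_⟩
  · intro i; fin_cases i <;> assumption
  · intro i; fin_cases i <;> assumption
  · simp [Fin.sum_univ_three, add_assoc]

lemma mem_cone4 {S : Set (Fin 3 → ℝ)} {v1 v2 v3 v4 : Fin 3 → ℝ}
    (h1 : v1 ∈ S) (h2 : v2 ∈ S) (h3 : v3 ∈ S) (h4 : v4 ∈ S) {a b c d : ℝ}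
    (ha : 0 ≤ a) (hb : 0 ≤ b) (hc : 0 ≤ c) (hd : 0 ≤ d) :
    a • v1 + b • v2 + c • v3 + d • v4 ∈ cone S := by
  refine ⟨4, ![a, b, c, d], ![v1, v2, v3, v4], ?_, ?_, ?_⟩
  · intro i; fin_cases i <;> assumption
  · intro i; fin_cases i <;> assumption
  · simp [Fin.sum_univ_four, add_assoc]

/-- Any element of a cone on 4 generators is an explicit nonneg combination. -/
lemma cone4_decomp {v1 v2 v3 v4 : Fin 3 → ℝ} :
    cone {v1, v2, v3, v4} ⊆
      {x | ∃ a b c d : ℝ, 0 ≤ a ∧ 0 ≤ b ∧ 0 ≤ c ∧ 0 ≤ d ∧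
        x = a • v1 + b • v2 + c • v3 + d • v4} := by
  apply cone_subset
  · exact ⟨0, 0, 0, 0, le_refl 0, le_refl 0, le_refl 0, le_refl 0, by simp⟩
  · rintro v (rfl | rfl | rfl | rfl) c hc
    · exact ⟨c, 0, 0, 0, hc, le_refl 0, le_refl 0, le_refl 0, by simp⟩
    · exact ⟨0, c, 0, 0, le_refl 0, hc, le_refl 0, le_refl 0, by simp⟩
    · exact ⟨0, 0, c, 0, le_refl 0, le_refl 0, hc, le_refl 0, by simp⟩
    · exact ⟨0, 0, 0, c, le_refl 0, le_refl 0, le_refl 0, hc, by simp⟩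
  · rintro x ⟨a, b, c, d, ha, hb, hc, hd, rfl⟩ y ⟨a', b', c', d', ha', hb', hc', hd', rfl⟩
    refine ⟨a + a', b + b', c + c', d + d', by positivity, by positivity, by positivity,
      by positivity, ?_⟩
    simp only [add_smul]; abel

/-- With `e₁ = (1,0,0)`, `u = e₁ + e₂ = (1,1,0)`, `w = (0,1,n)`, `e₃ = (0,0,1)` and `n ≥ 1`:
`⟨e₁,u,e₃⟩ ∪ ⟨u,w,e₃⟩ = ⟨e₁,u,w,e₃⟩ = ⟨e₁,w,e₃⟩ ∪ ⟨e₁,u,w⟩`, i.e. the fan of the toric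
log-flip has the same support before and after the flip. -/
theorem stmt_8 (n : ℕ) (hn : 1 ≤ n) :
    cone {![1, 0, 0], ![1, 1, 0], ![0, 0, 1]} ∪
        cone {![1, 1, 0], ![0, 1, (n : ℝ)], ![0, 0, 1]} =
      cone {![1, 0, 0], ![1, 1, 0], ![0, 1, (n : ℝ)], ![0, 0, 1]} ∧
    cone {![1, 0, 0], ![1, 1, 0], ![0, 1, (n : ℝ)], ![0, 0, 1]} =
      cone {![1, 0, 0], ![0, 1, (n : ℝ)], ![0, 0, 1]} ∪
        cone {![1, 0, 0], ![1, 1, 0], ![0, 1, (n : ℝ)]} := by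
  have hn0 : (0 : ℝ) < n := by exact_mod_cast Nat.lt_of_lt_of_le Nat.zero_lt_one hn
  set E1 : Fin 3 → ℝ := ![1, 0, 0] with hE1
  set U : Fin 3 → ℝ := ![1, 1, 0] with hU
  set W : Fin 3 → ℝ := ![0, 1, (n : ℝ)] with hW
  set E3 : Fin 3 → ℝ := ![0, 0, 1] with hE3
  have m1 : E1 ∈ ({E1, U, W, E3} : Set (Fin 3 → ℝ)) := by simp
  have m2 : U ∈ ({E1, U, W, E3} : Set (Fin 3 → ℝ)) := by simp
  have m3 : W ∈ ({E1, U, W, E3} : Set (Fin 3 → ℝ)) := by simp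
  have m4 : E3 ∈ ({E1, U, W, E3} : Set (Fin 3 → ℝ)) := by simp
  constructor
  · apply Set.Subset.antisymm
    · apply Set.union_subset
      · exact cone_mono (by intro x hx; rcases hx with rfl | rfl | rfl <;> simp)
      · exact cone_mono (by intro x hx; rcases hx with rfl | rfl | rfl <;> simp)
    · intro x hx
      obtain ⟨a, b, c, d, ha, hb, hc, hd, rfl⟩ := cone4_decomp hx
      rcases le_total c a with h | h
      · left
        have key : a • E1 + b • U + c • W + d • E3
            = (a - c) • E1 + (b + c) • U + (c * n + d) • E3 := by
          funext i; fin_cases i <;>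
            simp [hE1, hU, hW, hE3, Matrix.cons_val_zero, Matrix.cons_val_one] <;> ring
        rw [key]
        exact mem_cone3 (by simp) (by simp) (by simp) (by linarith) (by positivity)
          (by positivity)
      · right
        have key : a • E1 + b • U + c • W + d • E3
            = (a + b) • U + (c - a) • W + (a * n + d) • E3 := by
          funext i; fin_cases i <;>
            simp [hE1, hU, hW, hE3] <;> ring
        rw [key]
        exact mem_cone3 (by simp) (by simp) (by simp) (by positivity) (by linarith)
          (by positivity)
  · apply Set.Subset.antisymm
    · intro x hx
      obtain ⟨a, b, c, d, ha, hb, hc, hd, rfl⟩ := cone4_decomp hx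
      rcases le_total (n * b) d with h | h
      · left
        have key : a • E1 + b • U + c • W + d • E3
            = (a + b) • E1 + (b + c) • W + (d - n * b) • E3 := by
          funext i; fin_cases i <;> simp [hE1, hU, hW, hE3] <;> ring
        rw [key]
        exact mem_cone3 (by simp) (by simp) (by simp) (by positivity) (by positivity)
          (by linarith)
      · right
        have key : a • E1 + b • U + c • W + d • E3
            = (a + d / n) • E1 + (b - d / n) • U + (c + d / n) • W := by
          funext i; fin_cases i <;> simp [hE1, hU, hW, hE3] <;> field_simp <;> ring
        rw [key]
        have hbd : 0 ≤ b - d / n := by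
          rw [sub_nonneg, div_le_iff₀ hn0]; linarith
        exact mem_cone3 (by simp) (by simp) (by simp) (by positivity) hbd (by positivity)
    · apply Set.union_subset
      · exact cone_mono (by intro x hx; rcases hx with rfl | rfl | rfl <;> simp)
      · exact cone_mono (by intro x hx; rcases hx with rfl | rfl | rfl <;> simp)
end

section
/- Let N ≥ 1, let k₁, …, k_{N+1} and n₁, …, n_N be positive integers, and define vectors in ℝ³ by w₀ = e₁ = (1, 0, 0) and, for 1 ≤ i ≤ N+1, w_i = (1, k₁ + ⋯ + k_i, Σ_{j=2}^{i} (n₁ + ⋯ + n_{j−1})·k_j) (so w₁ = (1, k₁, 0)). Then ⋃_{i=1}^{N+1} cone{w_{i−1}, w_i, e₃} = cone{w₀, w₁, …, w_{N+1}, e₃}; i.e. the union of the consecutive simplicial cones of the fan is itself a convex cone. -/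
/-- The rays of the fan of a toric neighborhood of a chain of zero sections:
`w i = (1, k₁ + ⋯ + k_i, Σ_{j=2}^{i} (n₁ + ⋯ + n_{j−1})·k_j)`, so that `w 0 = e₁`. -/
def w (kk nn : ℕ → ℕ) (i : ℕ) : Fin 3 → ℝ :=
  ![1, ∑ j ∈ Finset.Icc 1 i, (kk j : ℝ),
    ∑ j ∈ Finset.Icc 2 i, (∑ l ∈ Finset.Icc 1 (j - 1), (nn l : ℝ)) * (kk j : ℝ)]

noncomputable def Aa (nn : ℕ → ℕ) (p : ℕ) : ℝ := ∑ l ∈ Finset.Icc 1 p, (nn l : ℝ)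

noncomputable def Sk (kk : ℕ → ℕ) (i : ℕ) : ℝ := ∑ j ∈ Finset.Icc 1 i, (kk j : ℝ)

noncomputable def Tk (kk nn : ℕ → ℕ) (i : ℕ) : ℝ :=
  ∑ j ∈ Finset.Icc 1 i, Aa nn (j - 1) * (kk j : ℝ)

lemma Aa_zero (nn : ℕ → ℕ) : Aa nn 0 = 0 := by simp [Aa]
lemma Sk_zero (kk : ℕ → ℕ) : Sk kk 0 = 0 := by simp [Sk]
lemma Tk_zero (kk nn : ℕ → ℕ) : Tk kk nn 0 = 0 := by simp [Tk]

lemma w_eq (kk nn : ℕ → ℕ) (i : ℕ) : w kk nn i = ![1, Sk kk i, Tk kk nn i] := by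
  have h : ∑ j ∈ Finset.Icc 2 i, (∑ l ∈ Finset.Icc 1 (j - 1), (nn l : ℝ)) * (kk j : ℝ)
      = ∑ j ∈ Finset.Icc 1 i, (∑ l ∈ Finset.Icc 1 (j - 1), (nn l : ℝ)) * (kk j : ℝ) := by
    refine Finset.sum_subset (Finset.Icc_subset_Icc_left (by norm_num)) ?_
    intro x hx hx'
    simp only [Finset.mem_Icc] at hx hx'
    have : x = 1 := by omega
    subst this
    simp
  simp only [w, Sk, Tk, Aa, h]

lemma Aa_mono (nn : ℕ → ℕ) {a b : ℕ} (h : a ≤ b) : Aa nn a ≤ Aa nn b := by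
  apply Finset.sum_le_sum_of_subset_of_nonneg (Finset.Icc_subset_Icc_right h)
  intros; positivity

lemma Aa_nonneg (nn : ℕ → ℕ) (p : ℕ) : 0 ≤ Aa nn p := by
  unfold Aa; positivity

lemma Sk_nonneg (kk : ℕ → ℕ) (i : ℕ) : 0 ≤ Sk kk i := by
  unfold Sk; positivity

lemma Sk_mono (kk : ℕ → ℕ) {a b : ℕ} (h : a ≤ b) : Sk kk a ≤ Sk kk b := by
  apply Finset.sum_le_sum_of_subset_of_nonneg (Finset.Icc_subset_Icc_right h)
  intros; positivity

lemma Sk_diff (kk : ℕ → ℕ) {p j : ℕ} (h : p ≤ j) :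
    Sk kk j - Sk kk p = ∑ q ∈ Finset.Ioc p j, (kk q : ℝ) := by
  have := Finset.sum_Ioc_consecutive (fun q => (kk q : ℝ)) (Nat.zero_le p) h
  simp only [Sk, ← Finset.Icc_add_one_left_eq_Ioc, Nat.succ_eq_add_one, zero_add] at *
  linarith

lemma Tk_diff (kk nn : ℕ → ℕ) {p j : ℕ} (h : p ≤ j) :
    Tk kk nn j - Tk kk nn p = ∑ q ∈ Finset.Ioc p j, Aa nn (q - 1) * (kk q : ℝ) := by
  have := Finset.sum_Ioc_consecutive (fun q => Aa nn (q - 1) * (kk q : ℝ)) (Nat.zero_le p) h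
  simp only [Tk, ← Finset.Icc_add_one_left_eq_Ioc, Nat.succ_eq_add_one, zero_add] at *
  linarith

/-- Convexity of the chain. -/
lemma convex_key (kk nn : ℕ → ℕ) (p j : ℕ) :
    Aa nn p * (Sk kk j - Sk kk p) + Tk kk nn p ≤ Tk kk nn j := by
  rcases le_total p j with h | h
  · rw [Sk_diff kk h]
    have h1 : Aa nn p * ∑ q ∈ Finset.Ioc p j, (kk q : ℝ)
        ≤ ∑ q ∈ Finset.Ioc p j, Aa nn (q - 1) * (kk q : ℝ) := by
      rw [Finset.mul_sum]
      apply Finset.sum_le_sum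
      intro q hq
      simp only [Finset.mem_Ioc] at hq
      exact mul_le_mul_of_nonneg_right (Aa_mono nn (by omega)) (by positivity)
    have h2 := Tk_diff kk nn h
    linarith
  · have h1 : ∑ q ∈ Finset.Ioc j p, Aa nn (q - 1) * (kk q : ℝ)
        ≤ Aa nn p * ∑ q ∈ Finset.Ioc j p, (kk q : ℝ) := by
      rw [Finset.mul_sum]
      apply Finset.sum_le_sum
      intro q hq
      simp only [Finset.mem_Ioc] at hq
      exact mul_le_mul_of_nonneg_right (Aa_mono nn (by omega)) (by positivity)
    have h2 := Tk_diff kk nn h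
    have h3 := Sk_diff kk h
    have h4 : Aa nn p * (Sk kk j - Sk kk p)
        = -(Aa nn p * ∑ q ∈ Finset.Ioc j p, (kk q : ℝ)) := by
      rw [← h3]; ring
    linarith

lemma Sk_succ (kk : ℕ → ℕ) (m : ℕ) : Sk kk (m + 1) = Sk kk m + kk (m + 1) := by
  simp [Sk, Finset.sum_Icc_succ_top (Nat.le_add_left 1 m)]

lemma Tk_succ (kk nn : ℕ → ℕ) (m : ℕ) :
    Tk kk nn (m + 1) = Tk kk nn m + Aa nn m * kk (m + 1) := by
  simp [Tk, Finset.sum_Icc_succ_top (Nat.le_add_left 1 m)]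

lemma zero_mem_cone (S : Set (Fin 3 → ℝ)) : (0 : Fin 3 → ℝ) ∈ cone S :=
  ⟨0, ![], ![], fun i => i.elim0, fun i => i.elim0, by simp⟩

lemma triple_mem_cone {u v t : Fin 3 → ℝ} {a b c : ℝ}
    (ha : 0 ≤ a) (hb : 0 ≤ b) (hc : 0 ≤ c) :
    a • u + b • v + c • t ∈ cone {u, v, t} := by
  refine ⟨3, ![a, b, c], ![u, v, t], ?_, ?_, ?_⟩
  · intro i; fin_cases i <;> simpa
  · intro i; fin_cases i <;> simp
  · simp [Fin.sum_univ_three]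

lemma cone_subset_of {S K : Set (Fin 3 → ℝ)} (h0 : (0 : Fin 3 → ℝ) ∈ K)
    (hadd : ∀ x y, x ∈ K → y ∈ K → x + y ∈ K)
    (hgen : ∀ (c : ℝ) v, 0 ≤ c → v ∈ S → c • v ∈ K) : cone S ⊆ K := by
  suffices H : ∀ r (c : Fin r → ℝ) (v : Fin r → Fin 3 → ℝ),
      (∀ i, 0 ≤ c i) → (∀ i, v i ∈ S) → ∑ i, c i • v i ∈ K by
    rintro x ⟨r, c, v, hc, hv, rfl⟩; exact H r c v hc hv
  intro r
  induction r with
  | zero => intro c v _ _; simpa using h0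
  | succ n ih =>
    intro c v hc hv
    rw [Fin.sum_univ_succ]
    exact hadd _ _ (hgen _ _ (hc 0) (hv 0))
      (ih (fun i => c i.succ) (fun i => v i.succ) (fun i => hc _) (fun i => hv _))

def Vset (kk nn : ℕ → ℕ) (N : ℕ) : Set (Fin 3 → ℝ) :=
  {x | 0 ≤ x 0 ∧ 0 ≤ x 1 ∧ x 1 ≤ Sk kk (N + 1) * x 0 ∧
    ∀ i ∈ Finset.Icc 1 (N + 1),
      Aa nn (i - 1) * x 1 + (Tk kk nn (i - 1) - Aa nn (i - 1) * Sk kk (i - 1)) * x 0 ≤ x 2}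

lemma zero_mem_V (kk nn : ℕ → ℕ) (N : ℕ) : (0 : Fin 3 → ℝ) ∈ Vset kk nn N := by
  refine ⟨le_refl _, le_refl _, by simp, ?_⟩
  intro i hi
  simp

lemma add_mem_V (kk nn : ℕ → ℕ) (N : ℕ) {x y : Fin 3 → ℝ}
    (hx : x ∈ Vset kk nn N) (hy : y ∈ Vset kk nn N) : x + y ∈ Vset kk nn N := by
  obtain ⟨hx0, hx1, hx2, hx3⟩ := hx
  obtain ⟨hy0, hy1, hy2, hy3⟩ := hy
  refine ⟨by simpa using add_nonneg hx0 hy0, by simpa using add_nonneg hx1 hy1, ?_, ?_⟩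
  · simp only [Pi.add_apply]; nlinarith
  · intro i hi
    have h1 := hx3 i hi
    have h2 := hy3 i hi
    simp only [Pi.add_apply]
    nlinarith

lemma smul_w_mem_V (kk nn : ℕ → ℕ) (N j : ℕ) (hj : j ≤ N + 1) {c : ℝ} (hc : 0 ≤ c) :
    c • w kk nn j ∈ Vset kk nn N := by
  have h0 : (c • w kk nn j) 0 = c := by simp [w_eq]
  have h1 : (c • w kk nn j) 1 = c * Sk kk j := by simp [w_eq]
  have h2 : (c • w kk nn j) 2 = c * Tk kk nn j := by simp [w_eq]
  refine ⟨by rw [h0]; exact hc, by rw [h1]; exact mul_nonneg hc (Sk_nonneg kk j), ?_, ?_⟩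
  · rw [h0, h1]
    nlinarith [Sk_mono kk hj]
  · intro i hi
    rw [h0, h1, h2]
    nlinarith [convex_key kk nn (i - 1) j]

lemma smul_e3_mem_V (kk nn : ℕ → ℕ) (N : ℕ) {c : ℝ} (hc : 0 ≤ c) :
    c • (![0, 0, 1] : Fin 3 → ℝ) ∈ Vset kk nn N := by
  have h0 : (c • (![0, 0, 1] : Fin 3 → ℝ)) 0 = 0 := by simp
  have h1 : (c • (![0, 0, 1] : Fin 3 → ℝ)) 1 = 0 := by simp
  have h2 : (c • (![0, 0, 1] : Fin 3 → ℝ)) 2 = c := by simp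
  refine ⟨by rw [h0], by rw [h1], by rw [h0, h1]; simp, ?_⟩
  intro i hi
  rw [h0, h1, h2]
  simpa using hc

lemma exists_index (kk : ℕ → ℕ) (x0 x1 : ℝ) (hx1 : 0 ≤ x1) :
    ∀ M, 1 ≤ M → x1 ≤ Sk kk M * x0 →
      ∃ i, 1 ≤ i ∧ i ≤ M ∧ Sk kk (i - 1) * x0 ≤ x1 ∧ x1 ≤ Sk kk i * x0 := by
  intro M
  induction M with
  | zero => intro h; omega
  | succ n ih =>
    intro _ hle
    by_cases hn1 : 1 ≤ n
    · by_cases h : x1 ≤ Sk kk n * x0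
      · obtain ⟨i, h1, h2, h3, h4⟩ := ih hn1 h
        exact ⟨i, h1, by omega, h3, h4⟩
      · push_neg at h
        refine ⟨n + 1, by omega, le_refl _, ?_, hle⟩
        simpa using h.le
    · have hn0 : n = 0 := by omega
      subst hn0
      refine ⟨1, le_refl _, le_refl _, ?_, hle⟩
      simpa [Sk_zero] using hx1

/-- For positive integers `k₁, …, k_{N+1}` and `n₁, …, n_N`, the union of the consecutive
simplicial cones `⟨w_{i−1}, w_i, e₃⟩`, `1 ≤ i ≤ N+1`, equals the single convex cone
`⟨w₀, w₁, …, w_{N+1}, e₃⟩` (where `w₀ = e₁`). -/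
theorem stmt_11 (N : ℕ) (hN : 1 ≤ N) (kk nn : ℕ → ℕ)
    (hk : ∀ i ∈ Finset.Icc 1 (N + 1), 0 < kk i)
    (hn : ∀ i ∈ Finset.Icc 1 N, 0 < nn i) :
    w kk nn 0 = ![1, 0, 0] ∧
    (⋃ i ∈ Finset.Icc 1 (N + 1),
        cone {w kk nn (i - 1), w kk nn i, ![0, 0, 1]}) =
      cone ((w kk nn '' Set.Iic (N + 1)) ∪ {![0, 0, 1]}) := by
  constructor
  · rw [w_eq]
    simp [Sk_zero, Tk_zero]
  apply Set.Subset.antisymm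
  · intro x hx
    simp only [Set.mem_iUnion] at hx
    obtain ⟨i, hi, hx⟩ := hx
    refine cone_mono ?_ hx
    intro v hv
    simp only [Finset.mem_Icc] at hi
    simp only [Set.mem_insert_iff, Set.mem_singleton_iff] at hv
    rcases hv with rfl | rfl | rfl
    · exact Or.inl ⟨i - 1, Set.mem_Iic.mpr (by omega), rfl⟩
    · exact Or.inl ⟨i, Set.mem_Iic.mpr (by omega), rfl⟩
    · exact Or.inr rfl
  · intro x hx
    have hxV : x ∈ Vset kk nn N := by
      refine cone_subset_of (zero_mem_V kk nn N) (fun a b ha hb => add_mem_V kk nn N ha hb)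
        ?_ hx
      rintro c v hc (⟨j, hj, rfl⟩ | hv)
      · exact smul_w_mem_V kk nn N j (Set.mem_Iic.mp hj) hc
      · rw [Set.mem_singleton_iff] at hv
        subst hv
        exact smul_e3_mem_V kk nn N hc
    obtain ⟨hx0, hx1, hx2, hx3⟩ := hxV
    rcases eq_or_lt_of_le hx0 with h0 | h0
    · -- x 0 = 0
      have hx0' : x 0 = 0 := h0.symm
      have h1 : x 1 = 0 := by
        rw [hx0', mul_zero] at hx2
        exact le_antisymm hx2 hx1
      have h2 : 0 ≤ x 2 := by
        have := hx3 1 (by simp)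
        simpa [Aa_zero, Tk_zero, Sk_zero] using this
      refine Set.mem_biUnion (show 1 ∈ Finset.Icc 1 (N + 1) by simp) ?_
      have hxeq : x = (0 : ℝ) • w kk nn 0 + (0 : ℝ) • w kk nn 1 +
          (x 2) • (![0, 0, 1] : Fin 3 → ℝ) := by
        funext j
        fin_cases j <;> simp [hx0', h1]
      rw [hxeq]
      exact triple_mem_cone le_rfl le_rfl h2
    · -- 0 < x 0
      obtain ⟨i, hi1, hi2, hA, hB⟩ := exists_index kk (x 0) (x 1) hx1 (N + 1) (by omega) hx2
      obtain ⟨m, rfl⟩ : ∃ m, i = m + 1 := ⟨i - 1, by omega⟩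
      simp only [Nat.add_sub_cancel] at hA
      have hmem : m + 1 ∈ Finset.Icc 1 (N + 1) := by simp; omega
      have hkpos : (0 : ℝ) < (kk (m + 1) : ℝ) := by exact_mod_cast hk _ hmem
      set K : ℝ := (kk (m + 1) : ℝ) with hKdef
      have hKne : K ≠ 0 := ne_of_gt hkpos
      set a := (Sk kk (m + 1) * x 0 - x 1) / K with hadef
      set b := (x 1 - Sk kk m * x 0) / K with hbdef
      have ha : 0 ≤ a := div_nonneg (by linarith) hkpos.le
      have hb : 0 ≤ b := div_nonneg (by linarith) hkpos.le
      have haK : a * K = Sk kk (m + 1) * x 0 - x 1 := div_mul_cancel₀ _ hKne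
      have hbK : b * K = x 1 - Sk kk m * x 0 := div_mul_cancel₀ _ hKne
      have hS : Sk kk (m + 1) = Sk kk m + K := Sk_succ kk m
      have hT : Tk kk nn (m + 1) = Tk kk nn m + Aa nn m * K := Tk_succ kk nn m
      have hab : a + b = x 0 := by
        have h5 : (a + b) * K = x 0 * K := by linear_combination haK + hbK + x 0 * hS
        exact mul_right_cancel₀ hKne h5
      have hab1 : a * Sk kk m + b * Sk kk (m + 1) = x 1 := by
        have h5 : (a * Sk kk m + b * Sk kk (m + 1)) * K = x 1 * K := by
          linear_combination Sk kk m * haK + Sk kk (m + 1) * hbK + x 1 * hS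
        exact mul_right_cancel₀ hKne h5
      have hid : a * Tk kk nn m + b * Tk kk nn (m + 1)
          = x 0 * Tk kk nn m + Aa nn m * (x 1 - Sk kk m * x 0) := by
        linear_combination Tk kk nn m * hab + b * hT + Aa nn m * hbK
      have hcon := hx3 (m + 1) hmem
      simp only [Nat.add_sub_cancel] at hcon
      have hc : 0 ≤ x 2 - (a * Tk kk nn m + b * Tk kk nn (m + 1)) := by
        rw [hid]; nlinarith [hcon]
      refine Set.mem_biUnion hmem ?_
      have hxeq : x = a • w kk nn m + b • w kk nn (m + 1) +
          (x 2 - (a * Tk kk nn m + b * Tk kk nn (m + 1))) • (![0, 0, 1] : Fin 3 → ℝ) := by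
        funext j
        fin_cases j <;> simp [w_eq] <;> linarith
      rw [hxeq]
      exact triple_mem_cone ha hb hc
end

section
/- Let k be a field of characteristic zero, let a and b be units of k⟦t⟧, and let n, m be natural numbers with 3n ≠ 2m. Let W be the Weierstrass curve y² = x³ + a tⁿ x + b tᵐ over k((t)). Then the discriminant of W is nonzero, the j-invariant of W lies in the subring k⟦t⟧ of k((t)), and its t-adic order equals 3n − min(3n, 2m). -/
/-!
The curve is the base change along `k⟦t⟧ → k((t))` of the curve `y² = x³ + a tⁿ x + b tᵐ` over
`k⟦t⟧`, whose discriminant is `-16 (4 a³ t³ⁿ + 27 b² t²ᵐ)`. Since `3n ≠ 2m`, one of the two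
terms strictly dominates, so `Δ = v t^min(3n, 2m)` with `v` a unit. As `c₄³ = w t³ⁿ` with `w`
a unit, `j = w v⁻¹ t^(3n - min(3n, 2m))`.
-/

open PowerSeries WeierstrassCurve

namespace PowerSeries

variable {R : Type*} [CommRing R]

theorem exists_add_eq_unit_mul_X_pow_of_lt {c : R⟦X⟧} (hc : IsUnit c) (d : R⟦X⟧) {r s : ℕ}
    (hrs : r < s) : ∃ u : R⟦X⟧ˣ, c * X ^ r + d * X ^ s = (u : R⟦X⟧) * X ^ r := by
  have hunit : IsUnit (c + d * X ^ (s - r)) := by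
    rw [isUnit_iff_constantCoeff] at hc ⊢
    simpa [zero_pow (Nat.sub_pos_of_lt hrs).ne'] using hc
  obtain ⟨u, hu⟩ := hunit
  refine ⟨u, ?_⟩
  rw [hu, add_mul, mul_assoc, ← pow_add, Nat.sub_add_cancel hrs.le]

theorem exists_add_eq_unit_mul_X_pow_min {c d : R⟦X⟧} (hc : IsUnit c) (hd : IsUnit d)
    {r s : ℕ} (hrs : r ≠ s) : ∃ u : R⟦X⟧ˣ, c * X ^ r + d * X ^ s = (u : R⟦X⟧) * X ^ min r s := by
  rcases hrs.lt_or_gt with hlt | hgt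
  · rw [min_eq_left hlt.le]
    exact exists_add_eq_unit_mul_X_pow_of_lt hc d hlt
  · rw [min_eq_right hgt.le, add_comm]
    exact exists_add_eq_unit_mul_X_pow_of_lt hd c hgt

theorem isUnit_ofNat_of_isUnit {N : ℕ} [N.AtLeastTwo] (hN : IsUnit (OfNat.ofNat N : R)) :
    IsUnit (OfNat.ofNat N : R⟦X⟧) := by
  rw [← map_ofNat C N]
  exact hN.map C

end PowerSeries

namespace WeierstrassCurve

variable {R : Type*} [CommRing R]

theorem exists_Δ_eq_unit_mul_X_pow (h2 : IsUnit (2 : R)) (h3 : IsUnit (3 : R))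
    (a b : R⟦X⟧ˣ) {n m : ℕ} (h : 3 * n ≠ 2 * m) :
    ∃ v : R⟦X⟧ˣ, (mk (0 : R⟦X⟧) 0 0 ((a : R⟦X⟧) * X ^ n) ((b : R⟦X⟧) * X ^ m)).Δ =
      (v : R⟦X⟧) * X ^ min (3 * n) (2 * m) := by
  have h2 : IsUnit (2 : R⟦X⟧) := isUnit_ofNat_of_isUnit h2
  have h3 : IsUnit (3 : R⟦X⟧) := isUnit_ofNat_of_isUnit h3
  have h4 : IsUnit (4 * (a : R⟦X⟧) ^ 3) := by
    rw [show (4 : R⟦X⟧) = 2 ^ 2 by norm_num]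
    exact (h2.pow 2).mul (a.isUnit.pow 3)
  have h27 : IsUnit (27 * (b : R⟦X⟧) ^ 2) := by
    rw [show (27 : R⟦X⟧) = 3 ^ 3 by norm_num]
    exact (h3.pow 3).mul (b.isUnit.pow 2)
  have h16 : IsUnit (-16 : R⟦X⟧) := by
    rw [show (-16 : R⟦X⟧) = -2 ^ 4 by norm_num]
    exact (h2.pow 4).neg
  obtain ⟨u, hu⟩ := exists_add_eq_unit_mul_X_pow_min h4 h27 h
  refine ⟨h16.unit * u, ?_⟩
  have : (mk (0 : R⟦X⟧) 0 0 ((a : R⟦X⟧) * X ^ n) ((b : R⟦X⟧) * X ^ m)).IsShortNF :=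
    ⟨rfl, rfl, rfl⟩
  rw [Δ_of_isShortNF, Units.val_mul, IsUnit.unit_spec, mul_assoc, ← hu]
  ring

end WeierstrassCurve

namespace LaurentSeries

variable {K : Type*} [Field K]

theorem coe_unit_mul_X_pow_ne_zero (v : K⟦X⟧ˣ) (r : ℕ) :
    (((v : K⟦X⟧) * X ^ r : K⟦X⟧) : K⸨X⸩) ≠ 0 := by
  rw [map_ne_zero_iff _ HahnSeries.ofPowerSeries_injective]
  exact mul_ne_zero v.ne_zero (pow_ne_zero r X_ne_zero)

theorem coe_mul_X_pow_add_div_coe_unit_mul_X_pow (w : K⟦X⟧) (v : K⟦X⟧ˣ) (e r : ℕ) :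
    ((w * X ^ (e + r) : K⟦X⟧) : K⸨X⸩) / (((v : K⟦X⟧) * X ^ r : K⟦X⟧) : K⸨X⸩) =
      ((w * (↑v⁻¹ : K⟦X⟧) * X ^ e : K⟦X⟧) : K⸨X⸩) := by
  rw [div_eq_iff (coe_unit_mul_X_pow_ne_zero v r), ← map_mul]
  congr 1
  linear_combination (-(w * X ^ (e + r))) * v.inv_mul

end LaurentSeries

/-- For units `a, b` of `k⟦t⟧` (char `k` = 0) and `3n ≠ 2m`, the Weierstrass curve
`y² = x³ + a tⁿ x + b tᵐ` over `k((t))` has nonzero discriminant, its j-invariant `c₄³/Δ`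
lies in the subring `k⟦t⟧` of `k((t))`, and its `t`-adic order is `3n − min (3n, 2m)`. -/
theorem stmt_13 (k : Type*) [Field k] [CharZero k] (a b : (PowerSeries k)ˣ)
    (n m : ℕ) (h : 3 * n ≠ 2 * m) :
    (WeierstrassCurve.mk 0 0 0
        (((a : PowerSeries k) : LaurentSeries k) * tL k ^ n)
        (((b : PowerSeries k) : LaurentSeries k) * tL k ^ m)).Δ ≠ 0 ∧
    ∃ f : PowerSeries k,
      (f : LaurentSeries k) =
        (WeierstrassCurve.mk 0 0 0
            (((a : PowerSeries k) : LaurentSeries k) * tL k ^ n)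
            (((b : PowerSeries k) : LaurentSeries k) * tL k ^ m)).c₄ ^ 3 /
          (WeierstrassCurve.mk 0 0 0
              (((a : PowerSeries k) : LaurentSeries k) * tL k ^ n)
              (((b : PowerSeries k) : LaurentSeries k) * tL k ^ m)).Δ ∧
      f.order = ((3 * n - min (3 * n) (2 * m) : ℕ) : ℕ∞) := by
  set W : WeierstrassCurve k⟦X⟧ := mk (0 : k⟦X⟧) 0 0 ((a : k⟦X⟧) * X ^ n) ((b : k⟦X⟧) * X ^ m)
  have hW : mk 0 0 0 (((a : k⟦X⟧) : LaurentSeries k) * tL k ^ n)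
      (((b : k⟦X⟧) : LaurentSeries k) * tL k ^ m) = W.map (HahnSeries.ofPowerSeries ℤ k) := by
    simp [W, tL, WeierstrassCurve.map]
  obtain ⟨v, hΔ⟩ := exists_Δ_eq_unit_mul_X_pow (isUnit_iff_ne_zero.mpr two_ne_zero)
    (isUnit_iff_ne_zero.mpr three_ne_zero) a b h
  have hc₄ : W.c₄ ^ 3 =
      (-48) ^ 3 * (a : k⟦X⟧) ^ 3 * X ^ (3 * n - min (3 * n) (2 * m) + min (3 * n) (2 * m)) := by
    have : W.IsShortNF := ⟨rfl, rfl, rfl⟩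
    rw [c₄_of_isShortNF, Nat.sub_add_cancel (min_le_left _ _)]
    ring
  rw [hW, map_Δ, map_c₄, ← map_pow, hΔ, hc₄,
    LaurentSeries.coe_mul_X_pow_add_div_coe_unit_mul_X_pow]
  refine ⟨LaurentSeries.coe_unit_mul_X_pow_ne_zero v _, _, rfl, ?_⟩
  have h48 : IsUnit (48 : k⟦X⟧) := isUnit_ofNat_of_isUnit (isUnit_iff_ne_zero.mpr (by norm_num))
  have hw : IsUnit ((-48) ^ 3 * (a : k⟦X⟧) ^ 3 * (↑v⁻¹ : k⟦X⟧)) :=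
    ((h48.neg.pow 3).mul (a.isUnit.pow 3)).mul v⁻¹.isUnit
  rw [order_mul, order_zero_of_unit hw, order_X_pow, zero_add]
end
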